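/- Anderson's resolution: let ℒ_z = ⨁_{y | z̄} 𝒜_{z/z(y)}[y], graded by deg[a,y] = −deg y, with differential d[a,y] = ∑_{x|y} ω(x,y) λ_{z(x)}[a, y/x], where ω(x,y) = (−1)^{#{x' | y : x' < x}} and λ_{z(x)}[a'] = p(x;Fr_x^{-1})[a'] − N_{z(x)}[z(x)a'] for a' not divisible by x (and 0 otherwise). Then the augmentation u: ℒ_z → 𝒰_z sending [a,1] ↦ [a] and [a,y] ↦ 0 for y ≠ 1 is a quasi-isomorphism: H^n(ℒ_z, d) = 0 for n ≠ 0 and H^0(ℒ_z, d) ≅ 𝒰_z. -/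

import Mathlib

/-! Universal norm distribution scaffold.  The finite element `z` has prime set `ι`
(totally ordered), multiplicities recorded only through the finite abelian groups
`G x = G_{z(x)}`; `G_z = ∏_{x|z} G_{z(x)}`.  A basis symbol `[g z']` of `𝒜_z` is a pair
of a stalk (a subset `S ⊆ ι`) and a group element `g ∈ G_{z'} = ∏_{x∈S} G x`, encoded
as a function on all of `ι` which is trivial outside `S`. -/

/-- Basis symbols `[g z']` of `𝒜_z`. -/
def UndIdx (ι : Type) (G : ι → Type) [∀ i, CommGroup (G i)] : Type :=
  {q : Finset ι × (∀ i, G i) // ∀ i ∉ q.1, q.2 i = 1}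

section
variable (ι : Type) [Fintype ι] [LinearOrder ι]
  (G : ι → Type) [∀ i, CommGroup (G i)] [∀ i, Fintype (G i)]

/-- Action of `σ ∈ G_z` on a symbol `[g z']`: multiply the components in the stalk. -/
def undAct (σ : ∀ i, G i) (q : UndIdx ι G) : UndIdx ι G :=
  ⟨(q.1.1, fun i => if i ∈ q.1.1 then σ i * q.1.2 i else 1), fun _ hi => if_neg hi⟩

/-- The symbol `[g h z(x) z']` obtained from `[g z']` by extending the stalk by `z(x)`
with component `h ∈ G_{z(x)}`. -/
def undExt (x : ι) (h : G x) (q : UndIdx ι G) : UndIdx ι G :=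
  ⟨(insert x q.1.1, Function.update q.1.2 x h), by
    intro i hi
    have hix : i ≠ x := fun e => hi (e ▸ Finset.mem_insert_self x q.1.1)
    show Function.update q.1.2 x h i = 1
    rw [Function.update_of_ne hix]
    exact q.2 i fun hm => hi (Finset.mem_insert_of_mem hm)⟩

variable (𝒯 : Type) [CommRing 𝒯] (p : ι → Polynomial 𝒯) (fr : ι → ∀ i, G i)

/-- The distribution relation `λ_{z(x)}([g z']) = p(x; Fr_x^{-1})[g z'] − N_{z(x)}[g z(x) z']`
(for `x` not dividing the stalk `z'`), as an element of the free module `𝒜_z`. -/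
noncomputable def undLam (x : ι) (q : UndIdx ι G) : UndIdx ι G →₀ 𝒯 :=
  (∑ k ∈ (p x).support,
      Finsupp.single (undAct ι G (fun i => (fr x i)⁻¹ ^ k) q) ((p x).coeff k))
    - ∑ h : G x, Finsupp.single (undExt ι G x h q) 1

/-- The `𝒯[G_z]`-submodule `𝒟_z` of distribution relations: the `𝒯`-span of all
`G_z`-translates of the `λ_{z(x)}([g z'])`, `x ∤ z'`. -/
noncomputable def undRel : Submodule 𝒯 (UndIdx ι G →₀ 𝒯) :=
  Submodule.span 𝒯
    {v | ∃ (σ : ∀ i, G i) (x : ι) (q : UndIdx ι G), x ∉ q.1.1 ∧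
      v = Finsupp.mapDomain (undAct ι G σ) (undLam ι G 𝒯 p fr x q)}

/-- The universal norm distribution `𝒰_z = 𝒜_z/𝒟_z`. -/
noncomputable abbrev UND : Type := (UndIdx ι G →₀ 𝒯) ⧸ undRel ι G 𝒯 p fr

end

section
variable (ι : Type) [Fintype ι] [LinearOrder ι]
  (G : ι → Type) [∀ i, CommGroup (G i)] [∀ i, Fintype (G i)]
  (𝒯 : Type) [CommRing 𝒯] (p : ι → Polynomial 𝒯) (fr : ι → ∀ i, G i)

/-- Basis symbols `[a, y]` of the degree-`(−n)` component `ℒ_z^{−n} = ⨁_{deg y = n} 𝒜_{z/z(y)}[y]`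
of Anderson's resolution: `y` a squarefree divisor of `z̄` of degree `n` and `a` a symbol
of `𝒜_{z/z(y)}` (a stalk disjoint from `y` together with a group element). -/
def AndIdx (n : ℕ) : Type :=
  {t : Finset ι × UndIdx ι G // t.1.card = n ∧ Disjoint t.1 t.2.1.1}

/-- The differential `d [a,y] = ∑_{x∣y} ω(x,y) λ_{z(x)} [a, y/x]` of Anderson's
resolution, from the degree-`(−n−1)` component to the degree-`(−n)` component, where
`ω(x,y) = (−1)^{#{x'∣y : x'<x}}` and
`λ_{z(x)}[a] = p(x;Fr_x^{-1})[a] − N_{z(x)}[z(x)a]`. -/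
noncomputable def andD (n : ℕ) :
    (AndIdx ι G (n + 1) →₀ 𝒯) →ₗ[𝒯] (AndIdx ι G n →₀ 𝒯) :=
  Finsupp.lsum 𝒯 fun t => LinearMap.toSpanSingleton 𝒯 _
    (∑ x ∈ t.1.1.attach,
      ((-1 : ℤ) ^ ((t.1.1.filter (fun x' => x' < x.1)).card)) •
        ((∑ k ∈ (p x.1).support,
            Finsupp.single
              (⟨(t.1.1.erase x.1, undAct ι G (fun i => (fr x.1 i)⁻¹ ^ k) t.1.2), by
                refine ⟨?_, ?_⟩
                · simp [Finset.card_erase_of_mem x.2, t.2.1]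
                · exact t.2.2.mono_left (Finset.erase_subset _ _)⟩ : AndIdx ι G n)
              ((p x.1).coeff k))
          - ∑ h : G x.1,
              Finsupp.single
                (⟨(t.1.1.erase x.1, undExt ι G x.1 h t.1.2), by
                  refine ⟨?_, ?_⟩
                  · simp [Finset.card_erase_of_mem x.2, t.2.1]
                  · show Disjoint (t.1.1.erase x.1) (insert x.1 t.1.2.1.1)
                    rw [Finset.disjoint_insert_right]
                    exact ⟨Finset.notMem_erase _ _,
                      t.2.2.mono_left (Finset.erase_subset _ _)⟩⟩ : AndIdx ι G n)
                (1 : 𝒯)))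

/-- The augmentation `u : ℒ_z^0 → 𝒰_z`, `[a, 1] ↦ [a]`. -/
noncomputable def andU : (AndIdx ι G 0 →₀ 𝒯) →ₗ[𝒯] UND ι G 𝒯 p fr :=
  Finsupp.lsum 𝒯 fun t => LinearMap.toSpanSingleton 𝒯 _
    (Submodule.Quotient.mk (Finsupp.single t.1.2 (1 : 𝒯)))

end

/-!
The differential splits as `d = d₁ + r`, where `d₁` keeps only the terms `h = 1` of the norms
`N_{z(x)}`: it moves a prime `x ∣ y` into the stalk with trivial component. So `d₁` is a Koszul
differential on the places of `y` and of the stalk with trivial component, and moving the least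
such place into `y` is a contracting homotopy `s` for it in negative degrees. The remaining terms
`r` strictly lower the weight `(deg y + #stalk)² + #(trivial places)`, which `d₁` and `s` preserve;
hence `f - d s f - s d f` has lower weight than `f`, and induction on the weight shows that every
cycle in negative degree is a boundary. `d ∘ d = 0` because the `λ_{z(x)}` for distinct `x`
commute while the signs `ω` alternate. In degree `0`, `d [a, z(x)] = λ_{z(x)} [a]`, so the image
of `d` is exactly `𝒟_z`.
-/

theorem mem_range_of_homotopy_mod_filtration {R : Type*} [Ring R] {C : ℕ → Type*}
    [∀ n, AddCommGroup (C n)] [∀ n, Module R (C n)]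
    (d : ∀ n, C (n + 1) →ₗ[R] C n) (hd : ∀ n g, d n (d (n + 1) g) = 0)
    (s : ∀ n, C n →ₗ[R] C (n + 1)) (F : ∀ n, ℕ → Submodule R (C n))
    (hF : ∀ n, F (n + 1) 0 = ⊥)
    (hs : ∀ n m, ∀ f ∈ F (n + 1) (m + 1),
      f - d (n + 1) (s (n + 1) f) - s n (d n f) ∈ F (n + 1) m)
    {n m : ℕ} {f : C (n + 1)} (hfm : f ∈ F (n + 1) m) (hf : d n f = 0) :
    f ∈ LinearMap.range (d (n + 1)) := by
  induction m generalizing f with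
  | zero =>
    rw [hF, Submodule.mem_bot] at hfm
    exact hfm ▸ zero_mem _
  | succ m ih =>
    have hlow : f - d (n + 1) (s (n + 1) f) ∈ F (n + 1) m := by
      simpa [hf] using hs n m f hfm
    have hclosed : d n (f - d (n + 1) (s (n + 1) f)) = 0 := by
      rw [map_sub, hf, hd, sub_zero]
    obtain ⟨g, hg⟩ := ih hlow hclosed
    exact ⟨s (n + 1) f + g, by rw [map_add, hg, add_sub_cancel]⟩

theorem Finsupp.map_mem_supported_of_forall_single {R α β : Type*} [Semiring R]
    (f : (α →₀ R) →ₗ[R] (β →₀ R)) {s : Set α} {s' : Set β}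
    (h : ∀ a ∈ s, f (Finsupp.single a 1) ∈ Finsupp.supported R R s') {v : α →₀ R}
    (hv : v ∈ Finsupp.supported R R s) : f v ∈ Finsupp.supported R R s' := by
  rw [Finsupp.supported_eq_span_single] at hv
  refine (Submodule.span_le.mpr ?_ : _ ≤ (Finsupp.supported R R s').comap f) hv
  rintro _ ⟨a, ha, rfl⟩
  exact h a ha

namespace UndIdx

variable {ι : Type} {G : ι → Type} [∀ i, CommGroup (G i)]

def stalk (q : UndIdx ι G) : Finset ι := q.1.1

def elt (q : UndIdx ι G) : ∀ i, G i := q.1.2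

theorem elt_of_notMem {q : UndIdx ι G} {i : ι} (hi : i ∉ q.stalk) : q.elt i = 1 := q.2 i hi

theorem ext' {q q' : UndIdx ι G} (h₁ : q.stalk = q'.stalk) (h₂ : q.elt = q'.elt) : q = q' :=
  Subtype.ext (Prod.ext h₁ h₂)

variable [LinearOrder ι]

@[simp]
theorem stalk_undAct (σ : ∀ i, G i) (q : UndIdx ι G) : (undAct ι G σ q).stalk = q.stalk := rfl

theorem elt_undAct (σ : ∀ i, G i) (q : UndIdx ι G) (i : ι) :
    (undAct ι G σ q).elt i = if i ∈ q.stalk then σ i * q.elt i else 1 := rfl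

@[simp]
theorem stalk_undExt (x : ι) (h : G x) (q : UndIdx ι G) :
    (undExt ι G x h q).stalk = insert x q.stalk := rfl

@[simp]
theorem elt_undExt (x : ι) (h : G x) (q : UndIdx ι G) :
    (undExt ι G x h q).elt = Function.update q.elt x h := rfl

theorem undAct_undAct (σ τ : ∀ i, G i) (q : UndIdx ι G) :
    undAct ι G σ (undAct ι G τ q) = undAct ι G (σ * τ) q := by
  refine ext' rfl (funext fun i => ?_)
  by_cases h : i ∈ q.stalk <;> simp [elt_undAct, h, mul_assoc]

theorem undAct_comm (σ τ : ∀ i, G i) (q : UndIdx ι G) :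
    undAct ι G σ (undAct ι G τ q) = undAct ι G τ (undAct ι G σ q) := by
  rw [undAct_undAct, undAct_undAct, mul_comm]

theorem undAct_one (q : UndIdx ι G) : undAct ι G 1 q = q := by
  refine ext' rfl (funext fun i => ?_)
  by_cases h : i ∈ q.stalk
  · simp [elt_undAct, h]
  · simp [elt_undAct, h, elt_of_notMem h]

theorem undAct_undExt (σ : ∀ i, G i) (x : ι) (h : G x) (q : UndIdx ι G) :
    undAct ι G σ (undExt ι G x h q) = undExt ι G x (σ x * h) (undAct ι G σ q) := by
  refine ext' rfl (funext fun i => ?_)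
  rcases eq_or_ne i x with rfl | hne
  · simp [elt_undAct]
  · simp [elt_undAct, hne]

theorem undExt_comm {x x' : ι} (hne : x ≠ x') (h : G x) (h' : G x') (q : UndIdx ι G) :
    undExt ι G x h (undExt ι G x' h' q) = undExt ι G x' h' (undExt ι G x h q) :=
  ext' (Finset.insert_comm x x' q.stalk) (Function.update_comm hne h h' q.elt).symm

end UndIdx

namespace AndIdx

variable {ι : Type} {G : ι → Type} [∀ i, CommGroup (G i)] {n : ℕ}

def divisor (t : AndIdx ι G n) : Finset ι := t.1.1

def symbol (t : AndIdx ι G n) : UndIdx ι G := t.1.2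

theorem card_divisor (t : AndIdx ι G n) : t.divisor.card = n := t.2.1

theorem disjoint_divisor_stalk (t : AndIdx ι G n) : Disjoint t.divisor t.symbol.stalk := t.2.2

theorem notMem_stalk (t : AndIdx ι G n) {x : ι} (hx : x ∈ t.divisor) : x ∉ t.symbol.stalk :=
  Finset.disjoint_left.mp t.disjoint_divisor_stalk hx

theorem notMem_divisor (t : AndIdx ι G n) {x : ι} (hx : x ∈ t.symbol.stalk) : x ∉ t.divisor :=
  Finset.disjoint_right.mp t.disjoint_divisor_stalk hx

theorem elt_eq_one (t : AndIdx ι G n) {x : ι} (hx : x ∈ t.divisor) : t.symbol.elt x = 1 :=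
  UndIdx.elt_of_notMem (t.notMem_stalk hx)

theorem ext' {t t' : AndIdx ι G n} (h₁ : t.divisor = t'.divisor) (h₂ : t.symbol = t'.symbol) :
    t = t' :=
  Subtype.ext (Prod.ext h₁ h₂)

def mk' (y : Finset ι) (q : UndIdx ι G) (hy : y.card = n) (hyq : Disjoint y q.stalk) :
    AndIdx ι G n :=
  ⟨(y, q), hy, hyq⟩

def zeroEquiv : AndIdx ι G 0 ≃ UndIdx ι G where
  toFun := symbol
  invFun q := mk' ∅ q rfl (Finset.disjoint_empty_left _)
  left_inv t := ext' (Finset.card_eq_zero.mp t.card_divisor).symm rfl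
  right_inv _ := rfl

def ofSingleton (x : ι) (q : UndIdx ι G) (hx : x ∉ q.stalk) : AndIdx ι G 1 :=
  mk' {x} q (Finset.card_singleton x) (Finset.disjoint_singleton_left.mpr hx)

theorem exists_eq_ofSingleton (t : AndIdx ι G 1) :
    ∃ x q, ∃ hx : x ∉ q.stalk, t = ofSingleton x q hx := by
  obtain ⟨x, hx⟩ := Finset.card_eq_one.mp t.card_divisor
  exact ⟨x, t.symbol, t.notMem_stalk (hx ▸ Finset.mem_singleton_self x), ext' hx rfl⟩

variable [LinearOrder ι] {x x' w : ι}

def dropAct (t : AndIdx ι G (n + 1)) (hx : x ∈ t.divisor) (σ : ∀ i, G i) : AndIdx ι G n :=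
  mk' (t.divisor.erase x) (undAct ι G σ t.symbol)
    (by rw [Finset.card_erase_of_mem hx, t.card_divisor, Nat.add_sub_cancel])
    (t.disjoint_divisor_stalk.mono_left (Finset.erase_subset _ _))

def moveToStalk (t : AndIdx ι G (n + 1)) (hx : x ∈ t.divisor) (h : G x) : AndIdx ι G n :=
  mk' (t.divisor.erase x) (undExt ι G x h t.symbol)
    (by rw [Finset.card_erase_of_mem hx, t.card_divisor, Nat.add_sub_cancel])
    (by
      rw [UndIdx.stalk_undExt, Finset.disjoint_insert_right]
      exact ⟨Finset.notMem_erase _ _,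
        t.disjoint_divisor_stalk.mono_left (Finset.erase_subset _ _)⟩)

def moveToDivisor (t : AndIdx ι G n) (hw : w ∈ t.symbol.stalk) (h1 : t.symbol.elt w = 1) :
    AndIdx ι G (n + 1) :=
  mk' (insert w t.divisor)
    ⟨(t.symbol.stalk.erase w, t.symbol.elt), fun i hi => by
      rcases eq_or_ne i w with rfl | hne
      · exact h1
      · exact UndIdx.elt_of_notMem fun him => hi (Finset.mem_erase.mpr ⟨hne, him⟩)⟩
    (by rw [Finset.card_insert_of_notMem (t.notMem_divisor hw), t.card_divisor])
    (by
      rw [Finset.disjoint_insert_left]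
      exact ⟨Finset.notMem_erase _ _,
        t.disjoint_divisor_stalk.mono_right (Finset.erase_subset _ _)⟩)

@[simp]
theorem divisor_dropAct (t : AndIdx ι G (n + 1)) (hx : x ∈ t.divisor) (σ : ∀ i, G i) :
    (t.dropAct hx σ).divisor = t.divisor.erase x := rfl

@[simp]
theorem divisor_moveToStalk (t : AndIdx ι G (n + 1)) (hx : x ∈ t.divisor) (h : G x) :
    (t.moveToStalk hx h).divisor = t.divisor.erase x := rfl

@[simp]
theorem divisor_moveToDivisor (t : AndIdx ι G n) (hw : w ∈ t.symbol.stalk)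
    (h1 : t.symbol.elt w = 1) : (t.moveToDivisor hw h1).divisor = insert w t.divisor := rfl

theorem mem_divisor_dropAct {t : AndIdx ι G (n + 1)} {hx : x ∈ t.divisor} {σ : ∀ i, G i} :
    x' ∈ (t.dropAct hx σ).divisor ↔ x' ≠ x ∧ x' ∈ t.divisor :=
  Finset.mem_erase

theorem mem_divisor_moveToStalk {t : AndIdx ι G (n + 1)} {hx : x ∈ t.divisor} {h : G x} :
    x' ∈ (t.moveToStalk hx h).divisor ↔ x' ≠ x ∧ x' ∈ t.divisor :=
  Finset.mem_erase

@[simp]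
theorem stalk_moveToStalk (t : AndIdx ι G (n + 1)) (hx : x ∈ t.divisor) (h : G x) :
    (t.moveToStalk hx h).symbol.stalk = insert x t.symbol.stalk := rfl

@[simp]
theorem elt_moveToStalk (t : AndIdx ι G (n + 1)) (hx : x ∈ t.divisor) (h : G x) :
    (t.moveToStalk hx h).symbol.elt = Function.update t.symbol.elt x h := rfl

@[simp]
theorem stalk_moveToDivisor (t : AndIdx ι G n) (hw : w ∈ t.symbol.stalk)
    (h1 : t.symbol.elt w = 1) :
    (t.moveToDivisor hw h1).symbol.stalk = t.symbol.stalk.erase w := rfl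

@[simp]
theorem elt_moveToDivisor (t : AndIdx ι G n) (hw : w ∈ t.symbol.stalk)
    (h1 : t.symbol.elt w = 1) : (t.moveToDivisor hw h1).symbol.elt = t.symbol.elt := rfl

theorem mem_divisor_moveToDivisor_self (t : AndIdx ι G n) (hw : w ∈ t.symbol.stalk)
    (h1 : t.symbol.elt w = 1) : w ∈ (t.moveToDivisor hw h1).divisor :=
  Finset.mem_insert_self w t.divisor

theorem mem_divisor_moveToDivisor {t : AndIdx ι G n} (hx : x ∈ t.divisor)
    (hw : w ∈ t.symbol.stalk) (h1 : t.symbol.elt w = 1) : x ∈ (t.moveToDivisor hw h1).divisor :=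
  Finset.mem_insert_of_mem hx

theorem mem_stalk_moveToStalk_self (t : AndIdx ι G (n + 1)) (hx : x ∈ t.divisor) (h : G x) :
    x ∈ (t.moveToStalk hx h).symbol.stalk :=
  Finset.mem_insert_self x _

theorem mem_stalk_moveToStalk {t : AndIdx ι G (n + 1)} (hx : x ∈ t.divisor) (h : G x)
    (hw : w ∈ t.symbol.stalk) : w ∈ (t.moveToStalk hx h).symbol.stalk :=
  Finset.mem_insert_of_mem hw

theorem elt_moveToStalk_one_apply {t : AndIdx ι G (n + 1)} (hx : x ∈ t.divisor) (w : ι) :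
    (t.moveToStalk hx 1).symbol.elt w = t.symbol.elt w := by
  rw [elt_moveToStalk, Function.update_eq_self_iff.mpr (t.elt_eq_one hx).symm]

theorem dropAct_dropAct (t : AndIdx ι G (n + 2)) (hx : x ∈ t.divisor) (hx' : x' ∈ t.divisor)
    (σ τ : ∀ i, G i) (hx'₁ : x' ∈ (t.dropAct hx σ).divisor)
    (hx₁ : x ∈ (t.dropAct hx' τ).divisor) :
    (t.dropAct hx σ).dropAct hx'₁ τ = (t.dropAct hx' τ).dropAct hx₁ σ :=
  ext' (Finset.erase_right_comm ..) (UndIdx.undAct_comm ..)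

theorem moveToStalk_moveToStalk (t : AndIdx ι G (n + 2)) (hx : x ∈ t.divisor)
    (hx' : x' ∈ t.divisor) (hne : x ≠ x') (h : G x) (h' : G x')
    (hx'₁ : x' ∈ (t.moveToStalk hx h).divisor) (hx₁ : x ∈ (t.moveToStalk hx' h').divisor) :
    (t.moveToStalk hx h).moveToStalk hx'₁ h' = (t.moveToStalk hx' h').moveToStalk hx₁ h :=
  ext' (Finset.erase_right_comm ..) (UndIdx.undExt_comm hne.symm ..)

theorem dropAct_moveToStalk (t : AndIdx ι G (n + 2)) (hx : x ∈ t.divisor)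
    (hx' : x' ∈ t.divisor) (σ : ∀ i, G i) (h' : G x')
    (hx'₁ : x' ∈ (t.dropAct hx σ).divisor) (hx₁ : x ∈ (t.moveToStalk hx' h').divisor) :
    (t.moveToStalk hx' h').dropAct hx₁ σ = (t.dropAct hx σ).moveToStalk hx'₁ (σ x' * h') :=
  ext' (Finset.erase_right_comm ..) (UndIdx.undAct_undExt ..)

theorem moveToStalk_moveToDivisor (t : AndIdx ι G (n + 1)) (hx : x ∈ t.divisor)
    (hw : w ∈ t.symbol.stalk) (h1 : t.symbol.elt w = 1)
    (hx₁ : x ∈ (t.moveToDivisor hw h1).divisor) (hw₁ : w ∈ (t.moveToStalk hx 1).symbol.stalk)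
    (h1₁ : (t.moveToStalk hx 1).symbol.elt w = 1) :
    (t.moveToDivisor hw h1).moveToStalk hx₁ 1 = (t.moveToStalk hx 1).moveToDivisor hw₁ h1₁ := by
  have hne : w ≠ x := fun e => t.notMem_stalk hx (e ▸ hw)
  exact ext' (Finset.erase_insert_of_ne hne)
    (UndIdx.ext' (Finset.erase_insert_of_ne hne.symm).symm rfl)

theorem moveToStalk_moveToDivisor_self (t : AndIdx ι G n) (hw : w ∈ t.symbol.stalk)
    (h1 : t.symbol.elt w = 1) (hw₁ : w ∈ (t.moveToDivisor hw h1).divisor) :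
    (t.moveToDivisor hw h1).moveToStalk hw₁ 1 = t := by
  refine ext' (Finset.erase_insert (t.notMem_divisor hw)) (UndIdx.ext' ?_ ?_)
  · exact Finset.insert_erase hw
  · exact Function.update_eq_self_iff.mpr h1.symm

theorem moveToDivisor_moveToStalk_self (t : AndIdx ι G (n + 1)) (hx : x ∈ t.divisor)
    (hx₁ : x ∈ (t.moveToStalk hx 1).symbol.stalk) (h1 : (t.moveToStalk hx 1).symbol.elt x = 1) :
    (t.moveToStalk hx 1).moveToDivisor hx₁ h1 = t := by
  refine ext' (Finset.insert_erase hx) (UndIdx.ext' ?_ ?_)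
  · exact Finset.erase_insert (t.notMem_stalk hx)
  · exact Function.update_eq_self_iff.mpr (t.elt_eq_one hx).symm

theorem moveToDivisor_congr {t : AndIdx ι G n} {w w' : ι} (e : w = w')
    (hw : w ∈ t.symbol.stalk) (h1 : t.symbol.elt w = 1) (hw' : w' ∈ t.symbol.stalk)
    (h1' : t.symbol.elt w' = 1) :
    t.moveToDivisor hw h1 = t.moveToDivisor hw' h1' := by
  subst e
  rfl

open scoped Classical in
noncomputable def trivialSet (t : AndIdx ι G n) : Finset ι :=
  t.divisor ∪ t.symbol.stalk.filter (t.symbol.elt · = 1)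

theorem mem_trivialSet {t : AndIdx ι G n} :
    w ∈ t.trivialSet ↔ w ∈ t.divisor ∨ w ∈ t.symbol.stalk ∧ t.symbol.elt w = 1 := by
  simp [trivialSet]

theorem elt_eq_one_of_mem_trivialSet {t : AndIdx ι G n} (hw : w ∈ t.trivialSet) :
    t.symbol.elt w = 1 :=
  (mem_trivialSet.mp hw).elim t.elt_eq_one And.right

theorem divisor_subset_trivialSet (t : AndIdx ι G n) : t.divisor ⊆ t.trivialSet :=
  Finset.subset_union_left

theorem card_trivialSet_le (t : AndIdx ι G n) :
    t.trivialSet.card ≤ t.divisor.card + t.symbol.stalk.card := by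
  classical
  exact (Finset.card_union_le _ _).trans (Nat.add_le_add_left (Finset.card_filter_le _ _) _)

theorem trivialSet_moveToStalk_one (t : AndIdx ι G (n + 1)) (hx : x ∈ t.divisor) :
    (t.moveToStalk hx 1).trivialSet = t.trivialSet := by
  ext v
  simp only [mem_trivialSet, divisor_moveToStalk, stalk_moveToStalk, elt_moveToStalk,
    Finset.mem_erase, Finset.mem_insert]
  rcases eq_or_ne v x with rfl | hne
  · simp [hx]
  · simp [hne]

theorem trivialSet_moveToStalk_of_ne_one (t : AndIdx ι G (n + 1)) (hx : x ∈ t.divisor)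
    {h : G x} (h1 : h ≠ 1) : (t.moveToStalk hx h).trivialSet = t.trivialSet.erase x := by
  ext v
  simp only [mem_trivialSet, divisor_moveToStalk, stalk_moveToStalk, elt_moveToStalk,
    Finset.mem_erase, Finset.mem_insert]
  rcases eq_or_ne v x with rfl | hne
  · simp [h1]
  · simp [hne]

theorem trivialSet_moveToDivisor (t : AndIdx ι G n) (hw : w ∈ t.symbol.stalk)
    (h1 : t.symbol.elt w = 1) : (t.moveToDivisor hw h1).trivialSet = t.trivialSet := by
  ext v
  simp only [mem_trivialSet, divisor_moveToDivisor, stalk_moveToDivisor, elt_moveToDivisor,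
    Finset.mem_erase, Finset.mem_insert]
  rcases eq_or_ne v w with rfl | hne
  · simp [hw, h1]
  · simp [hne]

noncomputable def weight (t : AndIdx ι G n) : ℕ :=
  (t.divisor.card + t.symbol.stalk.card) ^ 2 + t.trivialSet.card

theorem card_add_card_moveToStalk (t : AndIdx ι G (n + 1)) (hx : x ∈ t.divisor) (h : G x) :
    (t.moveToStalk hx h).divisor.card + (t.moveToStalk hx h).symbol.stalk.card =
      t.divisor.card + t.symbol.stalk.card := by
  rw [card_divisor, stalk_moveToStalk, Finset.card_insert_of_notMem (t.notMem_stalk hx),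
    t.card_divisor]
  ring

theorem weight_dropAct_lt (t : AndIdx ι G (n + 1)) (hx : x ∈ t.divisor) (σ : ∀ i, G i) :
    (t.dropAct hx σ).weight < t.weight := by
  have hb := (t.dropAct hx σ).card_trivialSet_le
  have hy : (t.dropAct hx σ).divisor.card + 1 = t.divisor.card := by
    rw [card_divisor, card_divisor]
  have hs : (t.dropAct hx σ).symbol.stalk.card = t.symbol.stalk.card := rfl
  unfold weight
  nlinarith

theorem weight_moveToStalk_lt (t : AndIdx ι G (n + 1)) (hx : x ∈ t.divisor) {h : G x}
    (h1 : h ≠ 1) : (t.moveToStalk hx h).weight < t.weight := by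
  have hx' : x ∈ t.trivialSet := t.divisor_subset_trivialSet hx
  unfold weight
  rw [card_add_card_moveToStalk, trivialSet_moveToStalk_of_ne_one _ _ h1,
    Finset.card_erase_of_mem hx']
  have := Finset.card_pos.mpr ⟨x, hx'⟩
  omega

theorem weight_moveToDivisor (t : AndIdx ι G n) (hw : w ∈ t.symbol.stalk)
    (h1 : t.symbol.elt w = 1) : (t.moveToDivisor hw h1).weight = t.weight := by
  unfold weight
  rw [trivialSet_moveToDivisor, divisor_moveToDivisor, stalk_moveToDivisor,
    Finset.card_insert_of_notMem (t.notMem_divisor hw), ← Finset.card_erase_add_one hw]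
  ring_nf

theorem weight_pos (t : AndIdx ι G (n + 1)) : 0 < t.weight := by
  have : 0 < t.divisor.card + t.symbol.stalk.card := by rw [t.card_divisor]; omega
  unfold weight
  positivity

end AndIdx

namespace AndersonResolution

open Finsupp AndIdx

variable {ι : Type} [LinearOrder ι] {G : ι → Type} [∀ i, CommGroup (G i)]
  {𝒯 : Type} [CommRing 𝒯] {n : ℕ} {x x' w : ι}

section Sign

variable {s : Finset ι}

-- The sign `ω(x, y)` of the differential.
def koszulSign (s : Finset ι) (x : ι) : ℤ := (-1) ^ (s.filter (· < x)).card

theorem koszulSign_of_forall_le (h : ∀ v ∈ s, x ≤ v) : koszulSign s x = 1 := by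
  rw [koszulSign, Finset.filter_false_of_mem fun v hv => not_lt.mpr (h v hv), Finset.card_empty,
    pow_zero]

theorem koszulSign_insert_of_lt (hw : w ∉ s) (h : w < x) :
    koszulSign (insert w s) x = -koszulSign s x := by
  rw [koszulSign, koszulSign, Finset.filter_insert, if_pos h,
    Finset.card_insert_of_notMem fun hm => hw (Finset.mem_of_mem_filter _ hm), pow_succ,
    mul_neg_one]

theorem koszulSign_erase_of_lt (hx : x ∈ s) (h : x < x') :
    koszulSign (s.erase x) x' = -koszulSign s x' := by
  have h' := koszulSign_insert_of_lt (Finset.notMem_erase x s) h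
  rw [Finset.insert_erase hx] at h'
  rw [h', neg_neg]

theorem koszulSign_erase_of_le (h : x' ≤ x) : koszulSign (s.erase x) x' = koszulSign s x' := by
  rw [koszulSign, koszulSign, Finset.filter_erase,
    Finset.erase_eq_of_notMem fun hm => (Finset.mem_filter.mp hm).2.not_ge h]

theorem koszulSign_mul_koszulSign_erase (hx : x ∈ s) (hx' : x' ∈ s) (hne : x ≠ x') :
    koszulSign s x * koszulSign (s.erase x) x' =
      -(koszulSign s x' * koszulSign (s.erase x') x) := by
  rcases hne.lt_or_gt with h | h
  · rw [koszulSign_erase_of_lt hx h, koszulSign_erase_of_le h.le]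
    ring
  · rw [koszulSign_erase_of_le h.le, koszulSign_erase_of_lt hx' h]
    ring

end Sign

variable (𝒯) in
noncomputable def unitOp (x : ι) (n : ℕ) :
    (AndIdx ι G (n + 1) →₀ 𝒯) →ₗ[𝒯] (AndIdx ι G n →₀ 𝒯) :=
  linearCombination 𝒯 fun t => if hx : x ∈ t.divisor then single (t.moveToStalk hx 1) 1 else 0

theorem unitOp_single {t : AndIdx ι G (n + 1)} (hx : x ∈ t.divisor) (c : 𝒯) :
    unitOp 𝒯 x n (single t c) = single (t.moveToStalk hx 1) c := by
  simp [unitOp, dif_pos hx]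

-- The terms `h = 1` of the norms in `andD`.
variable (𝒯) in
noncomputable def koszulD (n : ℕ) : (AndIdx ι G (n + 1) →₀ 𝒯) →ₗ[𝒯] (AndIdx ι G n →₀ 𝒯) :=
  linearCombination 𝒯 fun t =>
    -∑ x ∈ t.divisor, koszulSign t.divisor x • unitOp 𝒯 x n (single t 1)

theorem koszulD_single (t : AndIdx ι G (n + 1)) :
    koszulD 𝒯 n (single t 1) =
      -∑ x ∈ t.divisor, koszulSign t.divisor x • unitOp 𝒯 x n (single t 1) := by
  rw [koszulD, linearCombination_single, one_smul]

open scoped Classical in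
variable (𝒯) in
noncomputable def coneStep (t : AndIdx ι G n) : AndIdx ι G (n + 1) →₀ 𝒯 :=
  if hne : t.trivialSet.Nonempty then
    if hw : t.trivialSet.min' hne ∈ t.symbol.stalk then
      -single (t.moveToDivisor hw (elt_eq_one_of_mem_trivialSet (t.trivialSet.min'_mem hne))) 1
    else 0
  else 0

variable (𝒯) in
noncomputable def koszulHomotopy (n : ℕ) :
    (AndIdx ι G n →₀ 𝒯) →ₗ[𝒯] (AndIdx ι G (n + 1) →₀ 𝒯) :=
  linearCombination 𝒯 (coneStep 𝒯)

theorem koszulHomotopy_single_of_mem_stalk {t : AndIdx ι G n} (hw : w ∈ t.symbol.stalk)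
    (h1 : t.symbol.elt w = 1) (hmin : ∀ v ∈ t.trivialSet, w ≤ v) :
    koszulHomotopy 𝒯 n (single t 1) = -single (t.moveToDivisor hw h1) 1 := by
  have hwT : w ∈ t.trivialSet := mem_trivialSet.mpr (Or.inr ⟨hw, h1⟩)
  have hmin' : t.trivialSet.min' ⟨w, hwT⟩ = w :=
    le_antisymm (Finset.min'_le _ _ hwT) (Finset.le_min' _ _ _ hmin)
  rw [koszulHomotopy, linearCombination_single, one_smul, coneStep, dif_pos ⟨w, hwT⟩,
    dif_pos (by rw [hmin']; exact hw), moveToDivisor_congr hmin']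

theorem koszulHomotopy_single_of_mem_divisor {t : AndIdx ι G n} (hw : w ∈ t.divisor)
    (hmin : ∀ v ∈ t.trivialSet, w ≤ v) : koszulHomotopy 𝒯 n (single t 1) = 0 := by
  have hwT : w ∈ t.trivialSet := t.divisor_subset_trivialSet hw
  have hmin' : t.trivialSet.min' ⟨w, hwT⟩ = w :=
    le_antisymm (Finset.min'_le _ _ hwT) (Finset.le_min' _ _ _ hmin)
  rw [koszulHomotopy, linearCombination_single, one_smul, coneStep, dif_pos ⟨w, hwT⟩,
    dif_neg (by rw [hmin']; exact t.notMem_stalk hw)]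

theorem koszulD_koszulHomotopy_add_single_of_mem_divisor {t : AndIdx ι G (n + 1)}
    (hw : w ∈ t.divisor) (hmin : ∀ v ∈ t.trivialSet, w ≤ v) :
    koszulD 𝒯 (n + 1) (koszulHomotopy 𝒯 (n + 1) (single t 1)) +
      koszulHomotopy 𝒯 n (koszulD 𝒯 n (single t 1)) = single t 1 := by
  have hmin' : ∀ x (hx : x ∈ t.divisor), ∀ v ∈ (t.moveToStalk hx 1).trivialSet, w ≤ v :=
    fun x hx => (t.trivialSet_moveToStalk_one hx).symm ▸ hmin
  rw [koszulHomotopy_single_of_mem_divisor hw hmin, map_zero, zero_add, koszulD_single,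
    map_neg, map_sum, Finset.sum_eq_single_of_mem w hw]
  · rw [koszulSign_of_forall_le fun v hv => hmin v (t.divisor_subset_trivialSet hv), one_smul,
      unitOp_single hw, koszulHomotopy_single_of_mem_stalk (mem_stalk_moveToStalk_self _ hw 1)
        ((elt_moveToStalk_one_apply hw w).trans (t.elt_eq_one hw)) (hmin' w hw),
      moveToDivisor_moveToStalk_self, neg_neg]
  · intro x hx hxw
    rw [map_zsmul, unitOp_single hx, koszulHomotopy_single_of_mem_divisor
      (mem_divisor_moveToStalk.2 ⟨Ne.symm hxw, hw⟩) (hmin' x hx), smul_zero]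

theorem koszulD_koszulHomotopy_add_single_of_mem_stalk {t : AndIdx ι G (n + 1)}
    (hw : w ∈ t.symbol.stalk) (h1 : t.symbol.elt w = 1) (hmin : ∀ v ∈ t.trivialSet, w ≤ v) :
    koszulD 𝒯 (n + 1) (koszulHomotopy 𝒯 (n + 1) (single t 1)) +
      koszulHomotopy 𝒯 n (koszulD 𝒯 n (single t 1)) = single t 1 := by
  have hmin' : ∀ x (hx : x ∈ t.divisor), ∀ v ∈ (t.moveToStalk hx 1).trivialSet, w ≤ v :=
    fun x hx => (t.trivialSet_moveToStalk_one hx).symm ▸ hmin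
  have hlt : ∀ x ∈ t.divisor, w < x := fun x hx =>
    (hmin x (t.divisor_subset_trivialSet hx)).lt_of_ne fun e => t.notMem_stalk hx (e ▸ hw)
  have hself : koszulSign (insert w t.divisor) w •
      unitOp 𝒯 w (n + 1) (single (t.moveToDivisor hw h1) 1) = single t 1 := by
    rw [koszulSign_of_forall_le, one_smul, unitOp_single (mem_divisor_moveToDivisor_self _ hw h1),
      moveToStalk_moveToDivisor_self]
    simpa using fun v hv => (hlt v hv).le
  have hterm : ∀ x ∈ t.divisor, koszulSign (insert w t.divisor) x •
      unitOp 𝒯 x (n + 1) (single (t.moveToDivisor hw h1) 1) =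
        koszulHomotopy 𝒯 n (koszulSign t.divisor x • unitOp 𝒯 x n (single t 1)) := by
    intro x hx
    rw [koszulSign_insert_of_lt (t.notMem_divisor hw) (hlt x hx),
      unitOp_single (mem_divisor_moveToDivisor hx hw h1), map_zsmul, unitOp_single hx,
      koszulHomotopy_single_of_mem_stalk (mem_stalk_moveToStalk hx 1 hw)
        ((elt_moveToStalk_one_apply hx w).trans h1) (hmin' x hx),
      moveToStalk_moveToDivisor, smul_neg, neg_smul]
  rw [koszulHomotopy_single_of_mem_stalk hw h1 hmin, map_neg, koszulD_single,
    divisor_moveToDivisor, Finset.sum_insert (t.notMem_divisor hw), koszulD_single, map_neg,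
    map_sum, hself, Finset.sum_congr rfl hterm]
  abel

theorem koszulD_koszulHomotopy_add_single (t : AndIdx ι G (n + 1)) :
    koszulD 𝒯 (n + 1) (koszulHomotopy 𝒯 (n + 1) (single t 1)) +
      koszulHomotopy 𝒯 n (koszulD 𝒯 n (single t 1)) = single t 1 := by
  have hne : t.trivialSet.Nonempty := by
    refine (Finset.card_pos.mp ?_).mono t.divisor_subset_trivialSet
    rw [t.card_divisor]
    exact n.succ_pos
  have hmin : ∀ v ∈ t.trivialSet, t.trivialSet.min' hne ≤ v := fun v hv => Finset.min'_le _ _ hv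
  rcases mem_trivialSet.mp (t.trivialSet.min'_mem hne) with hw | ⟨hw, h1⟩
  · exact koszulD_koszulHomotopy_add_single_of_mem_divisor hw hmin
  · exact koszulD_koszulHomotopy_add_single_of_mem_stalk hw h1 hmin

theorem koszulD_koszulHomotopy_add (v : AndIdx ι G (n + 1) →₀ 𝒯) :
    koszulD 𝒯 (n + 1) (koszulHomotopy 𝒯 (n + 1) v) + koszulHomotopy 𝒯 n (koszulD 𝒯 n v) = v := by
  induction v using Finsupp.induction_linear with
  | zero => simp
  | add v w hv hw => rw [map_add, map_add, map_add, map_add, add_add_add_comm, hv, hw]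
  | single t c =>
    rw [← smul_single_one, map_smul, map_smul, map_smul, map_smul, ← smul_add,
      koszulD_koszulHomotopy_add_single]

variable (𝒯) in
noncomputable def filtration (n m : ℕ) : Submodule 𝒯 (AndIdx ι G n →₀ 𝒯) :=
  supported 𝒯 𝒯 {t | t.weight ≤ m}

theorem filtration_succ_zero (n : ℕ) : filtration 𝒯 (G := G) (n + 1) 0 = ⊥ := by
  have hempty : {t : AndIdx ι G (n + 1) | t.weight ≤ 0} = ∅ :=
    Set.eq_empty_of_forall_notMem fun t ht => t.weight_pos.not_ge ht
  rw [filtration, hempty, supported_empty]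

theorem mem_filtration_sup_weight (v : AndIdx ι G n →₀ 𝒯) :
    v ∈ filtration 𝒯 n (v.support.sup AndIdx.weight) :=
  fun _ ht => Finset.le_sup (f := AndIdx.weight) ht

theorem koszulHomotopy_mem_filtration {m : ℕ} {v : AndIdx ι G n →₀ 𝒯}
    (hv : v ∈ filtration 𝒯 n m) : koszulHomotopy 𝒯 n v ∈ filtration 𝒯 (n + 1) m := by
  refine map_mem_supported_of_forall_single _ (s := {t : AndIdx ι G n | t.weight ≤ m})
    (fun t ht => ?_) hv
  rw [koszulHomotopy, linearCombination_single, one_smul, coneStep]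
  split_ifs
  · exact neg_mem (single_mem_supported 𝒯 _ ((weight_moveToDivisor ..).trans_le ht))
  · exact zero_mem _
  · exact zero_mem _

variable (p : ι → Polynomial 𝒯) (fr : ι → ∀ i, G i)

-- `lamOp x = frobOp x - normOp x` is `λ_{z(x)}`, split into `p(x; Fr_x^{-1})` and `N_{z(x)}`.
noncomputable def frobOp (x : ι) (n : ℕ) :
    (AndIdx ι G (n + 1) →₀ 𝒯) →ₗ[𝒯] (AndIdx ι G n →₀ 𝒯) :=
  linearCombination 𝒯 fun t => if hx : x ∈ t.divisor then
    ∑ k ∈ (p x).support, single (t.dropAct hx ((fr x)⁻¹ ^ k)) ((p x).coeff k) else 0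

theorem frobOp_single {t : AndIdx ι G (n + 1)} (hx : x ∈ t.divisor) (c : 𝒯) :
    frobOp p fr x n (single t c) =
      ∑ k ∈ (p x).support, single (t.dropAct hx ((fr x)⁻¹ ^ k)) (c * (p x).coeff k) := by
  simp [frobOp, dif_pos hx, Finset.smul_sum]

theorem frobOp_frobOp_single {t : AndIdx ι G (n + 2)} (hx : x ∈ t.divisor)
    (hx' : x' ∈ t.divisor) (hne : x ≠ x') (c : 𝒯) :
    frobOp p fr x' n (frobOp p fr x (n + 1) (single t c)) =
      frobOp p fr x n (frobOp p fr x' (n + 1) (single t c)) := by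
  rw [frobOp_single p fr hx, frobOp_single p fr hx', map_sum, map_sum,
    Finset.sum_congr rfl fun k _ =>
      frobOp_single p fr (mem_divisor_dropAct.2 ⟨hne.symm, hx'⟩) _,
    Finset.sum_congr rfl fun k _ =>
      frobOp_single p fr (mem_divisor_dropAct.2 ⟨hne, hx⟩) _,
    Finset.sum_comm]
  refine Finset.sum_congr rfl fun k' _ => Finset.sum_congr rfl fun k _ => ?_
  rw [dropAct_dropAct, mul_right_comm]

variable [∀ i, Fintype (G i)]

variable (𝒯) in
noncomputable def normOp (x : ι) (n : ℕ) :
    (AndIdx ι G (n + 1) →₀ 𝒯) →ₗ[𝒯] (AndIdx ι G n →₀ 𝒯) :=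
  linearCombination 𝒯 fun t => if hx : x ∈ t.divisor then
    ∑ h : G x, single (t.moveToStalk hx h) 1 else 0

noncomputable def lamOp (x : ι) (n : ℕ) :
    (AndIdx ι G (n + 1) →₀ 𝒯) →ₗ[𝒯] (AndIdx ι G n →₀ 𝒯) :=
  frobOp p fr x n - normOp 𝒯 x n

theorem normOp_single {t : AndIdx ι G (n + 1)} (hx : x ∈ t.divisor) (c : 𝒯) :
    normOp 𝒯 x n (single t c) = ∑ h : G x, single (t.moveToStalk hx h) c := by
  simp [normOp, dif_pos hx, Finset.smul_sum]

theorem normOp_normOp_single {t : AndIdx ι G (n + 2)} (hx : x ∈ t.divisor)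
    (hx' : x' ∈ t.divisor) (hne : x ≠ x') (c : 𝒯) :
    normOp 𝒯 x' n (normOp 𝒯 x (n + 1) (single t c)) =
      normOp 𝒯 x n (normOp 𝒯 x' (n + 1) (single t c)) := by
  rw [normOp_single hx, normOp_single hx', map_sum, map_sum,
    Finset.sum_congr rfl fun h _ =>
      normOp_single (mem_divisor_moveToStalk.2 ⟨hne.symm, hx'⟩) c,
    Finset.sum_congr rfl fun h _ =>
      normOp_single (mem_divisor_moveToStalk.2 ⟨hne, hx⟩) c,
    Finset.sum_comm]
  refine Finset.sum_congr rfl fun h' _ => Finset.sum_congr rfl fun h _ => ?_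
  rw [moveToStalk_moveToStalk _ hx hx' hne]

theorem frobOp_normOp_single {t : AndIdx ι G (n + 2)} (hx : x ∈ t.divisor)
    (hx' : x' ∈ t.divisor) (hne : x ≠ x') (c : 𝒯) :
    frobOp p fr x' n (normOp 𝒯 x (n + 1) (single t c)) =
      normOp 𝒯 x n (frobOp p fr x' (n + 1) (single t c)) := by
  rw [normOp_single hx, frobOp_single p fr hx', map_sum, map_sum,
    Finset.sum_congr rfl fun h _ =>
      frobOp_single p fr (mem_divisor_moveToStalk.2 ⟨hne.symm, hx'⟩) c,
    Finset.sum_congr rfl fun k _ =>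
      normOp_single (mem_divisor_dropAct.2 ⟨hne, hx⟩) _,
    Finset.sum_comm]
  refine Finset.sum_congr rfl fun k _ => ?_
  -- `Fr_{x'}^{-k}` acts on `[h z(x) a]` through `h ↦ (Fr_{x'}^{-k})_x h`
  refine Fintype.sum_equiv (Equiv.mulLeft (((fr x')⁻¹ ^ k) x)) _ _ fun h => ?_
  rw [dropAct_moveToStalk _ hx' hx]
  rfl

theorem lamOp_lamOp_single {t : AndIdx ι G (n + 2)} (hx : x ∈ t.divisor)
    (hx' : x' ∈ t.divisor) (hne : x ≠ x') (c : 𝒯) :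
    lamOp p fr x' n (lamOp p fr x (n + 1) (single t c)) =
      lamOp p fr x n (lamOp p fr x' (n + 1) (single t c)) := by
  simp only [lamOp, LinearMap.sub_apply, map_sub]
  rw [frobOp_frobOp_single p fr hx hx' hne, normOp_normOp_single hx hx' hne,
    frobOp_normOp_single p fr hx hx' hne, frobOp_normOp_single p fr hx' hx hne.symm]
  abel

theorem lamOp_single {t : AndIdx ι G (n + 1)} (hx : x ∈ t.divisor) (c : 𝒯) :
    lamOp p fr x n (single t c) =
      c • (∑ k ∈ (p x).support, single (t.dropAct hx ((fr x)⁻¹ ^ k)) ((p x).coeff k) -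
        ∑ h : G x, single (t.moveToStalk hx h) 1) := by
  rw [lamOp, LinearMap.sub_apply, frobOp_single p fr hx, normOp_single hx, smul_sub,
    Finset.smul_sum, Finset.smul_sum]
  simp only [smul_single, smul_eq_mul, mul_one]

theorem andD_single (t : AndIdx ι G (n + 1)) (c : 𝒯) :
    andD ι G 𝒯 p fr n (single t c) =
      ∑ x ∈ t.divisor, koszulSign t.divisor x • lamOp p fr x n (single t c) := by
  rw [← Finset.sum_attach t.divisor,
    Finset.sum_congr rfl fun x _ => by rw [lamOp_single p fr x.2, smul_comm], ← Finset.smul_sum,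
    andD, lsum_single, LinearMap.toSpanSingleton_apply]
  rfl

theorem lamOp_single_mem_supported {t : AndIdx ι G (n + 1)} (hx : x ∈ t.divisor) (c : 𝒯) :
    lamOp p fr x n (single t c) ∈ supported 𝒯 𝒯 {t' | t'.divisor = t.divisor.erase x} := by
  rw [lamOp_single p fr hx]
  exact Submodule.smul_mem _ _ <| sub_mem
    (Submodule.sum_mem _ fun k _ => single_mem_supported 𝒯 _ rfl)
    (Submodule.sum_mem _ fun h _ => single_mem_supported 𝒯 _ rfl)

theorem andD_eq_sum_lamOp {s : Finset ι} {v : AndIdx ι G (n + 1) →₀ 𝒯}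
    (hv : v ∈ supported 𝒯 𝒯 {t | t.divisor = s}) :
    andD ι G 𝒯 p fr n v = ∑ x ∈ s, koszulSign s x • lamOp p fr x n v := by
  rw [supported_eq_span_single] at hv
  have key := LinearMap.eqOn_span' (f := andD ι G 𝒯 p fr n)
    (g := ∑ x ∈ s, koszulSign s x • lamOp p fr x n) ?_ hv
  · simpa using key
  · rintro _ ⟨t, rfl : t.divisor = s, rfl⟩
    simp [andD_single]

theorem andD_andD (v : AndIdx ι G (n + 2) →₀ 𝒯) :
    andD ι G 𝒯 p fr n (andD ι G 𝒯 p fr (n + 1) v) = 0 := by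
  induction v using Finsupp.induction_linear with
  | zero => simp
  | add v w hv hw => rw [map_add, map_add, hv, hw, add_zero]
  | single t c =>
    rw [andD_single, map_sum, Finset.sum_congr rfl fun x hx => by
      rw [map_zsmul, andD_eq_sum_lamOp p fr (lamOp_single_mem_supported p fr hx c),
        Finset.smul_sum]]
    simp only [smul_smul]
    rw [Finset.sum_sigma']
    -- the terms for `(x, x')` and `(x', x)` cancel
    refine Finset.sum_involution (fun q _ => ⟨q.2, q.1⟩) (fun q hq => ?_) (fun q hq _ => ?_)
      (fun q hq => ?_) (fun _ _ => rfl)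
    · obtain ⟨hx, hx'⟩ := Finset.mem_sigma.mp hq
      obtain ⟨hne, hx'⟩ := Finset.mem_erase.mp hx'
      rw [lamOp_lamOp_single p fr hx hx' hne.symm,
        koszulSign_mul_koszulSign_erase hx hx' hne.symm, neg_smul, neg_add_cancel]
    · exact fun h => (Finset.mem_erase.mp (Finset.mem_sigma.mp hq).2).1 (congrArg Sigma.fst h)
    · obtain ⟨hx, hx'⟩ := Finset.mem_sigma.mp hq
      obtain ⟨hne, hx'⟩ := Finset.mem_erase.mp hx'
      exact Finset.mem_sigma.mpr ⟨hx', Finset.mem_erase.mpr ⟨hne.symm, hx⟩⟩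

theorem lamOp_add_unitOp_single_mem_supported {t : AndIdx ι G (n + 1)} (hx : x ∈ t.divisor) :
    lamOp p fr x n (single t 1) + unitOp 𝒯 x n (single t 1) ∈
      supported 𝒯 𝒯 {t' | t'.weight < t.weight} := by
  classical
  rw [lamOp_single p fr hx, one_smul, unitOp_single hx,
    ← Finset.sum_erase_add _ _ (Finset.mem_univ 1), sub_add_eq_sub_sub, sub_add_cancel]
  exact sub_mem
    (Submodule.sum_mem _ fun k _ => single_mem_supported 𝒯 _ (t.weight_dropAct_lt hx _))
    (Submodule.sum_mem _ fun h hh =>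
      single_mem_supported 𝒯 _ (t.weight_moveToStalk_lt hx (Finset.ne_of_mem_erase hh)))

theorem andD_sub_koszulD_mem_filtration {m : ℕ} {v : AndIdx ι G (n + 1) →₀ 𝒯}
    (hv : v ∈ filtration 𝒯 (n + 1) (m + 1)) :
    andD ι G 𝒯 p fr n v - koszulD 𝒯 n v ∈ filtration 𝒯 n m := by
  refine map_mem_supported_of_forall_single (andD ι G 𝒯 p fr n - koszulD 𝒯 n)
    (s := {t : AndIdx ι G (n + 1) | t.weight ≤ m + 1}) (fun t ht => ?_) hv
  rw [LinearMap.sub_apply, andD_single, koszulD_single, sub_neg_eq_add,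
    ← Finset.sum_add_distrib]
  refine Submodule.sum_mem _ fun x hx => ?_
  rw [← smul_add]
  refine Submodule.smul_of_tower_mem _ _ (supported_mono (fun t' ht' => ?_)
    (lamOp_add_unitOp_single_mem_supported p fr hx))
  exact Nat.le_of_lt_succ (lt_of_lt_of_le ht' ht)

theorem andD_exact {f : AndIdx ι G (n + 1) →₀ 𝒯} (hf : andD ι G 𝒯 p fr n f = 0) :
    f ∈ LinearMap.range (andD ι G 𝒯 p fr (n + 1)) := by
  refine mem_range_of_homotopy_mod_filtration (andD ι G 𝒯 p fr) (fun _ => andD_andD p fr)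
    (koszulHomotopy 𝒯) (filtration 𝒯) filtration_succ_zero (fun n m f hf => ?_)
    (mem_filtration_sup_weight f) hf
  -- `andD - koszulD` lowers the weight, and `koszulHomotopy` contracts `koszulD`
  have key : f - andD ι G 𝒯 p fr (n + 1) (koszulHomotopy 𝒯 (n + 1) f) -
        koszulHomotopy 𝒯 n (andD ι G 𝒯 p fr n f) =
      -(andD ι G 𝒯 p fr (n + 1) (koszulHomotopy 𝒯 (n + 1) f) -
          koszulD 𝒯 (n + 1) (koszulHomotopy 𝒯 (n + 1) f)) -
        koszulHomotopy 𝒯 n (andD ι G 𝒯 p fr n f - koszulD 𝒯 n f) := by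
    nth_rewrite 1 [← koszulD_koszulHomotopy_add f]
    rw [map_sub]
    abel
  rw [key]
  exact sub_mem (neg_mem (andD_sub_koszulD_mem_filtration p fr
      (koszulHomotopy_mem_filtration hf)))
    (koszulHomotopy_mem_filtration (andD_sub_koszulD_mem_filtration p fr hf))

variable (𝒯) in
noncomputable def degreeZeroEquiv : (AndIdx ι G 0 →₀ 𝒯) ≃ₗ[𝒯] (UndIdx ι G →₀ 𝒯) :=
  Finsupp.domLCongr zeroEquiv

theorem andU_eq_mkQ_comp :
    andU ι G 𝒯 p fr = (undRel ι G 𝒯 p fr).mkQ ∘ₗ (degreeZeroEquiv 𝒯).toLinearMap := by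
  ext t
  simp [andU, degreeZeroEquiv]
  rfl

theorem mapDomain_undAct_undLam (σ : ∀ i, G i) (x : ι) (q : UndIdx ι G) :
    mapDomain (undAct ι G σ) (undLam ι G 𝒯 p fr x q) =
      undLam ι G 𝒯 p fr x (undAct ι G σ q) := by
  simp only [undLam, mapDomain_sub, mapDomain_finsetSum, mapDomain_single, UndIdx.undAct_comm σ,
    UndIdx.undAct_undExt]
  congr 1
  exact Fintype.sum_equiv (Equiv.mulLeft (σ x)) _ _ fun _ => rfl

theorem degreeZeroEquiv_andD_ofSingleton (x : ι) (q : UndIdx ι G) (hx : x ∉ q.stalk) :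
    degreeZeroEquiv 𝒯 (andD ι G 𝒯 p fr 0 (single (ofSingleton x q hx) 1)) =
      undLam ι G 𝒯 p fr x q := by
  have hx₁ : x ∈ (ofSingleton x q hx).divisor := Finset.mem_singleton_self x
  rw [andD_single, show (ofSingleton x q hx).divisor = {x} from rfl, Finset.sum_singleton,
    koszulSign_of_forall_le (by simp), one_smul, lamOp_single p fr hx₁, one_smul, map_sub,
    map_sum, map_sum]
  simp only [degreeZeroEquiv, domLCongr_single]
  rfl

theorem range_degreeZeroEquiv_comp_andD :
    LinearMap.range ((degreeZeroEquiv 𝒯).toLinearMap ∘ₗ andD ι G 𝒯 p fr 0) =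
      undRel ι G 𝒯 p fr := by
  apply le_antisymm
  · rintro _ ⟨v, rfl⟩
    induction v using Finsupp.induction_linear with
    | zero => simp
    | add v w hv hw => rw [map_add]; exact add_mem hv hw
    | single t c =>
      obtain ⟨x, q, hx, rfl⟩ := exists_eq_ofSingleton t
      rw [← smul_single_one, map_smul, LinearMap.comp_apply, LinearEquiv.coe_coe,
        degreeZeroEquiv_andD_ofSingleton]
      refine Submodule.smul_mem _ _ (Submodule.subset_span ⟨1, x, _, hx, ?_⟩)
      rw [mapDomain_undAct_undLam, UndIdx.undAct_one]
  · refine Submodule.span_le.mpr ?_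
    rintro _ ⟨σ, x, q, hx, rfl⟩
    rw [mapDomain_undAct_undLam]
    exact ⟨single (ofSingleton x (undAct ι G σ q) hx) 1,
      degreeZeroEquiv_andD_ofSingleton p fr _ _ _⟩

theorem andU_surjective : Function.Surjective (andU ι G 𝒯 p fr) := by
  rw [andU_eq_mkQ_comp, LinearMap.coe_comp]
  exact (Submodule.mkQ_surjective _).comp (LinearEquiv.surjective _)

theorem ker_andU :
    LinearMap.ker (andU ι G 𝒯 p fr) = LinearMap.range (andD ι G 𝒯 p fr 0) := by
  rw [andU_eq_mkQ_comp, LinearMap.ker_comp, Submodule.ker_mkQ, ← range_degreeZeroEquiv_comp_andD,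
    LinearMap.range_comp, Submodule.comap_map_eq_of_injective (LinearEquiv.injective _)]

end AndersonResolution

theorem stmt13 (ι : Type) [LinearOrder ι]
    (G : ι → Type) [∀ i, CommGroup (G i)] [∀ i, Fintype (G i)]
    (𝒯 : Type) [CommRing 𝒯]
    (p : ι → Polynomial 𝒯) (fr : ι → ∀ i, G i) :
    (∀ (n : ℕ) (f : AndIdx ι G (n + 1) →₀ 𝒯), andD ι G 𝒯 p fr n f = 0 →
        ∃ g : AndIdx ι G (n + 2) →₀ 𝒯, andD ι G 𝒯 p fr (n + 1) g = f) ∧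
      Function.Surjective (andU ι G 𝒯 p fr) ∧
      LinearMap.ker (andU ι G 𝒯 p fr) = LinearMap.range (andD ι G 𝒯 p fr 0) :=
  ⟨fun _ _ hf => AndersonResolution.andD_exact p fr hf, AndersonResolution.andU_surjective p fr,
    AndersonResolution.ker_andU p fr⟩
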